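/- Assume in addition that C is braided monoidal. Then for all objects x and y of C, the translation endofunctor τ_x and the evanescence endofunctor κ_y commute up to natural isomorphism: there is a natural isomorphism τ_x ∘ κ_y ≅ κ_y ∘ τ_x of endofunctors of Fct(C, A). -/

import Mathlib

/-!
Translations act by precomposition, so `τ_x` preserves kernels: `τ_x ∘ κ_y` is the kernel of the
whiskered transformation `τ_x i_y`, while `κ_y ∘ τ_x` is the kernel of `i_y τ_x`.
The braiding `y ⊗ x ≅ x ⊗ y` yields an isomorphism `τ_y ∘ τ_x ≅ τ_x ∘ τ_y` carrying one of these
transformations to the other, because the braiding of the unit with `x` is trivial. Kernels do not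
change under postcomposition with an isomorphism.
-/

open CategoryTheory CategoryTheory.Limits CategoryTheory.MonoidalCategory

variable {C : Type*} [Category C] [MonoidalCategory C]
variable {A : Type*} [Category A] [Abelian A]

/-- The translation endofunctor `τ_x` of `Fct(C, A)`: precomposition with `x ⊗ -`. -/
noncomputable def tauF (A : Type*) [Category A] (x : C) : (C ⥤ A) ⥤ (C ⥤ A) :=
  (Functor.whiskeringLeft C C A).obj (tensorLeft x)

/-- The component `i_x(F) : F ⟶ τ_x F`, whose component at `c` is
`F` applied to `c ≅ 𝟙 ⊗ c ⟶ x ⊗ c`. -/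
def iApp (hI : IsInitial (𝟙_ C)) (x : C) (F : C ⥤ A) : F ⟶ tensorLeft x ⋙ F where
  app c := F.map ((λ_ c).inv ≫ hI.to x ▷ c)
  naturality c c' f := by
    dsimp
    rw [← F.map_comp, ← F.map_comp]
    congr 1
    rw [leftUnitor_inv_naturality_assoc, whisker_exchange, Category.assoc]

/-- The natural transformation `i_x : Id ⟶ τ_x` of endofunctors of `Fct(C, A)`. -/
noncomputable def iNT (hI : IsInitial (𝟙_ C)) (x : C) :
    𝟭 (C ⥤ A) ⟶ tauF A x where
  app F := iApp hI x F
  naturality F G η := by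
    ext c
    exact (η.naturality _).symm

/-- The evanescence endofunctor `κ_x = ker(i_x)` of `Fct(C, A)`. -/
noncomputable def kappaF (hI : IsInitial (𝟙_ C)) (x : C) : (C ⥤ A) ⥤ (C ⥤ A) :=
  kernel (iNT (A := A) hI x)

/-- The difference endofunctor `δ_x = coker(i_x)` of `Fct(C, A)`. -/
noncomputable def deltaF (hI : IsInitial (𝟙_ C)) (x : C) : (C ⥤ A) ⥤ (C ⥤ A) :=
  cokernel (iNT (A := A) hI x)

instance Functor.whiskeringRight_obj_preservesZeroMorphisms {B D E : Type*} [Category B]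
    [Category D] [Category E] [HasZeroMorphisms D] [HasZeroMorphisms E] (G : D ⥤ E)
    [G.PreservesZeroMorphisms] :
    ((Functor.whiskeringRight B D E).obj G).PreservesZeroMorphisms where

instance tauF_preservesFiniteLimits (x : C) : PreservesFiniteLimits (tauF A x) :=
  inferInstanceAs (PreservesFiniteLimits ((Functor.whiskeringLeft C C A).obj (tensorLeft x)))

section Braided

variable [BraidedCategory C]

noncomputable def tensorLeftCommIso (x y : C) :
    tensorLeft x ⋙ tensorLeft y ≅ tensorLeft y ⋙ tensorLeft x :=
  (tensorLeftTensor y x).symm ≪≫ (tensoringLeft C).mapIso (β_ y x) ≪≫ tensorLeftTensor x y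

lemma tensorLeftCommIso_hom_app (x y c : C) :
    (tensorLeftCommIso x y).hom.app c = (α_ y x c).inv ≫ (β_ y x).hom ▷ c ≫ (α_ x y c).hom := by
  simp [tensorLeftCommIso]

lemma leftUnitor_inv_whiskerRight_tensorLeftCommIso {y : C} (f : 𝟙_ C ⟶ y) (x c : C) :
    (λ_ (x ⊗ c)).inv ≫ f ▷ (x ⊗ c) ≫ (tensorLeftCommIso x y).hom.app c
      = x ◁ ((λ_ c).inv ≫ f ▷ c) := by
  rw [tensorLeftCommIso_hom_app, associator_inv_naturality_left_assoc, ← comp_whiskerRight_assoc,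
    BraidedCategory.braiding_naturality_left, braiding_tensorUnit_left, leftUnitor_tensor_inv]
  simp only [Category.assoc, Iso.hom_inv_id_assoc, comp_whiskerRight,
    associator_naturality_middle, inv_hom_whiskerRight_assoc,
    triangle_assoc_comp_right_inv_assoc, MonoidalCategory.whiskerLeft_comp]

noncomputable def tauCommIso (A : Type*) [Category A] (x y : C) :
    tauF A y ⋙ tauF A x ≅ tauF A x ⋙ tauF A y :=
  (Functor.whiskeringLeft C C A).mapIso (tensorLeftCommIso x y)

lemma whiskerLeft_iNT_eq_whiskerRight_comp_tauCommIso {A : Type*} [Category A]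
    (hI : IsInitial (𝟙_ C)) (x y : C) :
    Functor.whiskerLeft (tauF A x) (iNT hI y)
      = Functor.whiskerRight (iNT hI y) (tauF A x) ≫ (tauCommIso A x y).hom := by
  ext F c
  dsimp [tauF, iNT, iApp, tauCommIso]
  rw [← F.map_comp, ← leftUnitor_inv_whiskerRight_tensorLeftCommIso]
  simp

end Braided

/-- The translation and evanescence endofunctors commute up to natural isomorphism:
`τ_x ∘ κ_y ≅ κ_y ∘ τ_x`. -/
theorem tau_comm_kappa [BraidedCategory C] (hI : IsInitial (𝟙_ C)) (x y : C) :
    Nonempty ((kappaF (A := A) hI y ⋙ tauF A x) ≅ (tauF A x ⋙ kappaF hI y)) := by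
  let i := iNT (A := A) hI y
  let R := (Functor.whiskeringRight (C ⥤ A) (C ⥤ A) (C ⥤ A)).obj (tauF A x)
  let L := (Functor.whiskeringLeft (C ⥤ A) (C ⥤ A) (C ⥤ A)).obj (tauF A x)
  have hLR : L.map i = R.map i ≫ (tauCommIso A x y).hom :=
    whiskerLeft_iNT_eq_whiskerRight_comp_tauCommIso hI x y
  exact ⟨PreservesKernel.iso R i ≪≫ (kernelCompMono (R.map i) (tauCommIso A x y).hom).symm
    ≪≫ kernelIsoOfEq hLR.symm ≪≫ (PreservesKernel.iso L i).symm⟩
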